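/- Let X, X_1, ..., X_n be nonnegative i.i.d. real random variables satisfying P(X > u) ≤ C·exp(-u) for all u ≥ 0, where C > 1. Set X̄_i = X_i - E[X_i] and c_u = 3 + e + C. Then for every γ ∈ (0,1) and every x_n > 0, P(∑_{i=1}^n X̄_i > x_n) ≤ exp( c_u · n · max(γ²E[X²], (γ²E[X²])^{1-γ}) - γ·x_n/2 ). -/

import Mathlib

open MeasureTheory ProbabilityTheory

lemma L2 {p : ℝ} (hp : p < -1) {c : ℝ} (hc : 0 < c) {K : ℝ} (hK : 0 ≤ K) :
    ∫⁻ u in Set.Ioi c, ENNReal.ofReal (K * u ^ p) =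
      ENNReal.ofReal (K * (-c ^ (p + 1) / (p + 1))) := by
  rw [← ofReal_integral_eq_lintegral_ofReal
    ((integrableOn_Ioi_rpow_of_lt hp hc).const_mul K)]
  · rw [integral_const_mul, integral_Ioi_rpow_of_lt hp hc]
  · filter_upwards [ae_restrict_mem measurableSet_Ioi] with u hu
    exact mul_nonneg hK (Real.rpow_nonneg (le_of_lt (hc.trans hu)) p)

lemma L3 {Ω : Type*} [MeasurableSpace Ω] (P : Measure Ω) [IsProbabilityMeasure P]
    {g : Ω → ℝ} (hg : Measurable g) (hgnn : ∀ ω, 0 ≤ g ω)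
    {u0 : ℝ} (hu0 : 0 < u0) {K1 : ℝ} (hK1 : 0 ≤ K1) {p K2 : ℝ} (hp : p < -1) (hK2 : 0 ≤ K2)
    (h1 : ∀ u, 0 < u → u ≤ u0 → P {ω | u < g ω} ≤ ENNReal.ofReal K1)
    (h2 : ∀ u, u0 < u → P {ω | u < g ω} ≤ ENNReal.ofReal (K2 * u ^ p)) :
    ∫⁻ ω, ENNReal.ofReal (g ω) ∂P ≤
      ENNReal.ofReal (K1 * u0) + ENNReal.ofReal (K2 * (-u0 ^ (p + 1) / (p + 1))) := by
  rw [lintegral_eq_lintegral_meas_lt P (Filter.Eventually.of_forall hgnn) hg.aemeasurable]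
  have hset : Set.Ioi (0 : ℝ) = Set.Ioc 0 u0 ∪ Set.Ioi u0 := (Set.Ioc_union_Ioi_eq_Ioi hu0.le).symm
  rw [hset]
  refine le_trans (lintegral_union_le _ _ _) (add_le_add ?_ ?_)
  · calc ∫⁻ u in Set.Ioc 0 u0, P {ω | u < g ω}
        ≤ ∫⁻ _ in Set.Ioc 0 u0, ENNReal.ofReal K1 := by
          refine setLIntegral_mono measurable_const fun u hu => h1 u hu.1 hu.2
      _ = ENNReal.ofReal K1 * ENNReal.ofReal u0 := by
          rw [setLIntegral_const, Real.volume_Ioc, sub_zero]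
      _ = ENNReal.ofReal (K1 * u0) := (ENNReal.ofReal_mul hK1).symm
  · calc ∫⁻ u in Set.Ioi u0, P {ω | u < g ω}
        ≤ ∫⁻ u in Set.Ioi u0, ENNReal.ofReal (K2 * u ^ p) := by
          refine setLIntegral_mono (by fun_prop) fun u hu => h2 u hu
      _ = ENNReal.ofReal (K2 * (-u0 ^ (p + 1) / (p + 1))) := L2 hp hu0 hK2

lemma exp_quad {z z0 : ℝ} (hz : 0 ≤ z) (hzz : z ≤ z0) :
    Real.exp z ≤ 1 + z + z ^ 2 / 2 * Real.exp z0 := by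
  have h1 : ∫ s in (0:ℝ)..z, (Real.exp s - 1) = Real.exp z - 1 - z := by
    rw [intervalIntegral.integral_sub (Real.continuous_exp.intervalIntegrable _ _)
      (intervalIntegrable_const)]
    simp [integral_exp]
  have h2 : ∫ s in (0:ℝ)..z, (Real.exp z0 * s) = Real.exp z0 * (z ^ 2 / 2) := by
    rw [intervalIntegral.integral_const_mul]
    simp [integral_id]
  have hmono : ∫ s in (0:ℝ)..z, (Real.exp s - 1) ≤ ∫ s in (0:ℝ)..z, (Real.exp z0 * s) := by
    apply intervalIntegral.integral_mono_on hz
      ((Real.continuous_exp.sub continuous_const).intervalIntegrable _ _)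
      ((continuous_const.mul continuous_id).intervalIntegrable _ _)
    intro u hu
    have hu0 : 0 ≤ u := hu.1
    have huz : u ≤ z0 := hu.2.trans hzz
    have hprod : Real.exp (-u) * Real.exp u = 1 := by
      rw [← Real.exp_add]; simp
    have : Real.exp u - 1 ≤ u * Real.exp u := by
      nlinarith [Real.add_one_le_exp (-u), Real.exp_pos u]
    calc Real.exp u - 1 ≤ u * Real.exp u := this
      _ ≤ u * Real.exp z0 := by
          exact mul_le_mul_of_nonneg_left (Real.exp_le_exp.2 huz) hu0
      _ = Real.exp z0 * u := mul_comm _ _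
  rw [h1, h2] at hmono
  nlinarith

section
variable {Ω : Type*} [MeasurableSpace Ω] (P : Measure Ω) [IsProbabilityMeasure P]
  (X0 : Ω → ℝ) (C t : ℝ)

lemma int_exp (hmeas0 : Measurable X0) (hnn0 : ∀ ω, 0 ≤ X0 ω)
    (hEtail : ∀ u : ℝ, 0 ≤ u → P {ω | u < X0 ω} ≤ ENNReal.ofReal (C * Real.exp (-u)))
    (hC : 0 < C) (ht0 : 0 < t) (ht2 : t ≤ 1/2) :
    Integrable (fun ω => Real.exp (t * X0 ω)) P := by
  have hp : (-1/t : ℝ) < -1 := by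
    rw [div_lt_iff₀ ht0]; nlinarith
  refine ⟨(hmeas0.const_mul t).exp.aestronglyMeasurable, ?_⟩
  rw [hasFiniteIntegral_iff_ofReal (Filter.Eventually.of_forall fun ω => (Real.exp_pos _).le)]
  have h1 : ∀ u : ℝ, 0 < u → u ≤ 1 → P {ω | u < Real.exp (t * X0 ω)} ≤ ENNReal.ofReal 1 := by
    intro u _ _
    rw [ENNReal.ofReal_one]
    exact prob_le_one
  have h2 : ∀ u : ℝ, (1:ℝ) < u → P {ω | u < Real.exp (t * X0 ω)} ≤
      ENNReal.ofReal (C * u ^ (-1/t : ℝ)) := by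
    intro u hu
    have hu0 : 0 < u := lt_trans one_pos hu
    have hsub : {ω | u < Real.exp (t * X0 ω)} ⊆ {ω | Real.log u / t < X0 ω} := by
      intro ω hω
      have := Real.log_lt_log hu0 hω
      rw [Real.log_exp] at this
      exact (div_lt_iff₀ ht0).2 (by linarith [this])
    have hlognn : 0 ≤ Real.log u / t := div_nonneg (Real.log_nonneg hu.le) ht0.le
    refine le_trans (measure_mono hsub) (le_trans (hEtail _ hlognn) (le_of_eq ?_))
    rw [Real.rpow_def_of_pos hu0]
    ring_nf
  refine lt_of_le_of_lt
    (L3 P ((hmeas0.const_mul t).exp) (fun ω => (Real.exp_pos _).le) one_pos zero_le_one hp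
      hC.le h1 h2) ?_
  exact ENNReal.add_lt_top.2 ⟨ENNReal.ofReal_lt_top, ENNReal.ofReal_lt_top⟩

lemma int_sq (hmeas0 : Measurable X0) (hnn0 : ∀ ω, 0 ≤ X0 ω)
    (hEtail : ∀ u : ℝ, 0 ≤ u → P {ω | u < X0 ω} ≤ ENNReal.ofReal (C * Real.exp (-u)))
    (hC : 0 < C) (ht0 : 0 < t) (ht2 : t ≤ 1/2) :
    Integrable (fun ω => (X0 ω) ^ 2) P := by
  have hie := int_exp P X0 C t hmeas0 hnn0 hEtail hC ht0 ht2
  refine Integrable.mono' (hie.const_mul (4 / t ^ 2)) ((hmeas0.pow_const 2).aestronglyMeasurable) ?_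
  refine Filter.Eventually.of_forall fun ω => ?_
  have h1 : t * X0 ω ≤ 2 * Real.exp (t * X0 ω / 2) := by
    have := Real.add_one_le_exp (t * X0 ω / 2)
    linarith
  have h2 : Real.exp (t * X0 ω / 2) * Real.exp (t * X0 ω / 2) = Real.exp (t * X0 ω) := by
    rw [← Real.exp_add]; ring_nf
  have h3 : (t * X0 ω) ^ 2 ≤ 4 * Real.exp (t * X0 ω) := by
    nlinarith [mul_nonneg ht0.le (hnn0 ω), Real.exp_pos (t * X0 ω / 2)]
  have ht2' : 0 < t ^ 2 := by positivity
  rw [Real.norm_eq_abs, abs_of_nonneg (sq_nonneg _), div_mul_eq_mul_div, le_div_iff₀ ht2']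
  nlinarith [h3]

lemma int_X0 (hmeas0 : Measurable X0) (hnn0 : ∀ ω, 0 ≤ X0 ω)
    (hEtail : ∀ u : ℝ, 0 ≤ u → P {ω | u < X0 ω} ≤ ENNReal.ofReal (C * Real.exp (-u)))
    (hC : 0 < C) (ht0 : 0 < t) (ht2 : t ≤ 1/2) :
    Integrable X0 P := by
  have hsq := int_sq P X0 C t hmeas0 hnn0 hEtail hC ht0 ht2
  refine Integrable.mono' ((integrable_const 1).add hsq) hmeas0.aestronglyMeasurable ?_
  refine Filter.Eventually.of_forall fun ω => ?_
  rw [Real.norm_eq_abs, abs_of_nonneg (hnn0 ω)]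
  simp only [Pi.add_apply]
  nlinarith [sq_nonneg (X0 ω - 1)]



lemma tail_part (hmeas0 : Measurable X0)
    (hEtail : ∀ u : ℝ, 0 ≤ u → P {ω | u < X0 ω} ≤ ENNReal.ofReal (C * Real.exp (-u)))
    (hC : 0 < C) (ht0 : 0 < t) (ht2 : t ≤ 1/2) (T : ℝ) (hT : 0 ≤ T)
    (hind : Integrable (fun ω => Set.indicator {ω' | T < X0 ω'}
      (fun ω' => Real.exp (t * X0 ω')) ω) P) :
    ∫ ω, Set.indicator {ω' | T < X0 ω'} (fun ω' => Real.exp (t * X0 ω')) ω ∂P ≤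
      2 * C * Real.exp (t * T - T) := by
  set S : Set Ω := {ω' | T < X0 ω'} with hS
  have hSmeas : MeasurableSet S := measurableSet_lt measurable_const hmeas0
  set h : Ω → ℝ := fun ω => Set.indicator S (fun ω' => Real.exp (t * X0 ω')) ω with hh
  have hnnh : ∀ ω, 0 ≤ h ω := fun ω => Set.indicator_nonneg (fun ω' _ => (Real.exp_pos _).le) ω
  have hmeash : Measurable h := ((hmeas0.const_mul t).exp).indicator hSmeas
  have hp : (-1/t : ℝ) < -1 := by rw [div_lt_iff₀ ht0]; nlinarith
  have hu0pos : (0:ℝ) < Real.exp (t * T) := Real.exp_pos _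
  -- pointwise tail bounds
  have h1 : ∀ u : ℝ, 0 < u → u ≤ Real.exp (t * T) →
      P {ω | u < h ω} ≤ ENNReal.ofReal (C * Real.exp (-T)) := by
    intro u hu _
    have hsub : {ω | u < h ω} ⊆ {ω | T < X0 ω} := by
      intro ω hω
      have hlt : u < h ω := hω
      by_contra hc
      have hz : h ω = 0 := Set.indicator_of_notMem hc _
      rw [hz] at hlt; exact absurd hlt (not_lt.2 hu.le)
    exact le_trans (measure_mono hsub) (hEtail T hT)
  have h2 : ∀ u : ℝ, Real.exp (t * T) < u →
      P {ω | u < h ω} ≤ ENNReal.ofReal (C * u ^ (-1/t : ℝ)) := by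
    intro u hu
    have hu1 : (1:ℝ) ≤ u := le_of_lt (lt_of_le_of_lt (Real.one_le_exp (by positivity)) hu)
    have hu0 : 0 < u := lt_of_lt_of_le one_pos hu1
    have hsub : {ω | u < h ω} ⊆ {ω | Real.log u / t < X0 ω} := by
      intro ω hω
      simp only [Set.mem_setOf_eq]
      have hlt : u < h ω := hω
      have hmem : ω ∈ S := by
        by_contra hc
        have hz : h ω = 0 := Set.indicator_of_notMem hc _
        rw [hz] at hlt; exact absurd hlt (not_lt.2 hu0.le)
      have hval : h ω = Real.exp (t * X0 ω) := Set.indicator_of_mem hmem _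
      rw [hval] at hlt
      have := Real.log_lt_log hu0 hlt
      rw [Real.log_exp] at this
      exact (div_lt_iff₀ ht0).2 (by linarith)
    have hlognn : 0 ≤ Real.log u / t := div_nonneg (Real.log_nonneg hu1) ht0.le
    refine le_trans (measure_mono hsub) (le_trans (hEtail _ hlognn) (le_of_eq ?_))
    rw [Real.rpow_def_of_pos hu0]
    ring_nf
  -- integral to lintegral
  have hint_eq : ∫ ω, h ω ∂P = (∫⁻ ω, ENNReal.ofReal (h ω) ∂P).toReal := by
    rw [integral_eq_lintegral_of_nonneg_ae (Filter.Eventually.of_forall hnnh)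
      hmeash.aestronglyMeasurable]
  have hbound := L3 P hmeash hnnh hu0pos (by positivity : (0:ℝ) ≤ C * Real.exp (-T)) hp hC.le h1 h2
  -- arithmetic
  have hterm1 : C * Real.exp (-T) * Real.exp (t * T) = C * Real.exp (t * T - T) := by
    rw [mul_assoc, ← Real.exp_add]; ring_nf
  have hrpow : Real.exp (t * T) ^ ((-1/t : ℝ) + 1) = Real.exp (t * T - T) * (Real.exp 0)⁻¹ := by
    rw [← Real.exp_mul]
    rw [Real.exp_zero]
    congr 1
    field_simp
    ring
  have hterm2 : C * (-Real.exp (t * T) ^ ((-1/t : ℝ) + 1) / ((-1/t : ℝ) + 1)) =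
      C * Real.exp (t * T - T) * (t / (1 - t)) := by
    rw [hrpow, Real.exp_zero]
    have htne : t ≠ 0 := ht0.ne'
    have h1t : (1:ℝ) - t ≠ 0 := by intro hc; rw [sub_eq_zero] at hc; linarith
    have hm : (-1:ℝ) + t ≠ 0 := by intro hc; apply h1t; linarith
    field_simp
    ring_nf
  rw [hint_eq]
  have hfin : (ENNReal.ofReal (C * Real.exp (-T) * Real.exp (t * T)) +
      ENNReal.ofReal (C * (-Real.exp (t * T) ^ ((-1/t : ℝ) + 1) / ((-1/t : ℝ) + 1)))).toReal ≤
      2 * C * Real.exp (t * T - T) := by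
    rw [ENNReal.toReal_add ENNReal.ofReal_ne_top ENNReal.ofReal_ne_top]
    have hE : 0 < Real.exp (t * T - T) := Real.exp_pos _
    have htfrac : t / (1 - t) ≤ 1 := by
      rw [div_le_one (by linarith)]; linarith
    have htfrac0 : 0 ≤ t / (1 - t) := div_nonneg ht0.le (by linarith)
    rw [ENNReal.toReal_ofReal (by positivity), ENNReal.toReal_ofReal (by
      rw [hterm2]; positivity)]
    rw [hterm1, hterm2]
    nlinarith [mul_pos hC hE]
  refine le_trans (ENNReal.toReal_mono ?_ hbound) hfin
  exact (ENNReal.add_lt_top.2 ⟨ENNReal.ofReal_lt_top, ENNReal.ofReal_lt_top⟩).ne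

lemma centered_mgf_bound (hmeas0 : Measurable X0) (hnn0 : ∀ ω, 0 ≤ X0 ω)
    (hEtail : ∀ u : ℝ, 0 ≤ u → P {ω | u < X0 ω} ≤ ENNReal.ofReal (C * Real.exp (-u)))
    (hC : 0 < C) (ht0 : 0 < t) (ht2 : t ≤ 1/2) (T : ℝ) (hT : 0 ≤ T) :
    ∫ ω, Real.exp (t * (X0 ω - ∫ ω', X0 ω' ∂P)) ∂P ≤
      Real.exp (t ^ 2 / 2 * Real.exp (t * T) * (∫ ω, (X0 ω) ^ 2 ∂P) +
        2 * C * Real.exp (t * T - T)) := by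
  set m := ∫ ω', X0 ω' ∂P with hm
  set s := ∫ ω, (X0 ω) ^ 2 ∂P with hs
  have hie := int_exp P X0 C t hmeas0 hnn0 hEtail hC ht0 ht2
  have hisq := int_sq P X0 C t hmeas0 hnn0 hEtail hC ht0 ht2
  have hiX0 := int_X0 P X0 C t hmeas0 hnn0 hEtail hC ht0 ht2
  set S : Set Ω := {ω' | T < X0 ω'} with hS
  have hSmeas : MeasurableSet S := measurableSet_lt measurable_const hmeas0
  set hI : Ω → ℝ := fun ω => Set.indicator S (fun ω' => Real.exp (t * X0 ω')) ω with hhI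
  have hindI : Integrable hI P := hie.indicator hSmeas
  -- pointwise bound
  have hpoint : ∀ ω, Real.exp (t * X0 ω) ≤
      1 + t * X0 ω + t ^ 2 / 2 * Real.exp (t * T) * (X0 ω) ^ 2 + hI ω := by
    intro ω
    by_cases hω : ω ∈ S
    · have hval : hI ω = Real.exp (t * X0 ω) := Set.indicator_of_mem hω _
      rw [hval]
      have h1 : 0 ≤ t * X0 ω := mul_nonneg ht0.le (hnn0 ω)
      have h2 : 0 ≤ t ^ 2 / 2 * Real.exp (t * T) * (X0 ω) ^ 2 := by positivity
      linarith
    · have hval : hI ω = 0 := Set.indicator_of_notMem hω _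
      rw [hval, add_zero]
      have hXT : X0 ω ≤ T := not_lt.1 hω
      have := exp_quad (mul_nonneg ht0.le (hnn0 ω))
        (mul_le_mul_of_nonneg_left hXT ht0.le)
      calc Real.exp (t * X0 ω) ≤ 1 + t * X0 ω + (t * X0 ω) ^ 2 / 2 * Real.exp (t * T) := this
        _ = 1 + t * X0 ω + t ^ 2 / 2 * Real.exp (t * T) * (X0 ω) ^ 2 := by ring
  -- integrate
  have hRHSint : Integrable (fun ω =>
      1 + t * X0 ω + t ^ 2 / 2 * Real.exp (t * T) * (X0 ω) ^ 2 + hI ω) P := by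
    exact (((integrable_const 1).add (hiX0.const_mul t)).add
      (hisq.const_mul (t ^ 2 / 2 * Real.exp (t * T)))).add hindI
  have hmono : ∫ ω, Real.exp (t * X0 ω) ∂P ≤
      ∫ ω, (1 + t * X0 ω + t ^ 2 / 2 * Real.exp (t * T) * (X0 ω) ^ 2 + hI ω) ∂P :=
    integral_mono hie hRHSint hpoint
  have hsplit : ∫ ω, (1 + t * X0 ω + t ^ 2 / 2 * Real.exp (t * T) * (X0 ω) ^ 2 + hI ω) ∂P =
      1 + t * m + t ^ 2 / 2 * Real.exp (t * T) * s + ∫ ω, hI ω ∂P := by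
    have e1 : Integrable (fun ω => (1:ℝ) + t * X0 ω) P :=
      (integrable_const 1).add (hiX0.const_mul t)
    have e2 : Integrable (fun ω => (1:ℝ) + t * X0 ω +
        t ^ 2 / 2 * Real.exp (t * T) * X0 ω ^ 2) P :=
      e1.add (hisq.const_mul (t ^ 2 / 2 * Real.exp (t * T)))
    rw [integral_add e2 hindI, integral_add e1 (hisq.const_mul (t ^ 2 / 2 * Real.exp (t * T))),
      integral_add (integrable_const 1) (hiX0.const_mul t),
      integral_const, integral_const_mul, integral_const_mul]
    simp [hm, hs]
  have htail := tail_part P X0 C t hmeas0 hEtail hC ht0 ht2 T hT hindI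
  have hmgf : ∫ ω, Real.exp (t * X0 ω) ∂P ≤
      1 + t * m + t ^ 2 / 2 * Real.exp (t * T) * s + 2 * C * Real.exp (t * T - T) := by
    rw [hsplit] at hmono
    linarith
  -- center
  set B := t ^ 2 / 2 * Real.exp (t * T) * s + 2 * C * Real.exp (t * T - T) with hB
  have hcenter : ∀ ω, Real.exp (t * (X0 ω - m)) = Real.exp (-(t * m)) * Real.exp (t * X0 ω) := by
    intro ω; rw [← Real.exp_add]; ring_nf
  calc ∫ ω, Real.exp (t * (X0 ω - m)) ∂P
      = Real.exp (-(t * m)) * ∫ ω, Real.exp (t * X0 ω) ∂P := by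
        simp_rw [hcenter]; rw [integral_const_mul]
    _ ≤ Real.exp (-(t * m)) * (1 + t * m + B) := by
        exact mul_le_mul_of_nonneg_left (by rw [hB]; linarith [hmgf]) (Real.exp_nonneg _)
    _ ≤ Real.exp (-(t * m)) * Real.exp (t * m + B) := by
        refine mul_le_mul_of_nonneg_left ?_ (Real.exp_nonneg _)
        have := Real.add_one_le_exp (t * m + B)
        linarith
    _ = Real.exp B := by rw [← Real.exp_add]; ring_nf

lemma per_var (hmeas0 : Measurable X0) (hnn0 : ∀ ω, 0 ≤ X0 ω)
    (hEtail : ∀ u : ℝ, 0 ≤ u → P {ω | u < X0 ω} ≤ ENNReal.ofReal (C * Real.exp (-u)))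
    (hC : 1 < C) (γ : ℝ) (hγ0 : 0 < γ) (hγ1 : γ < 1) :
    ∫ ω, Real.exp ((γ/2) * (X0 ω - ∫ ω', X0 ω' ∂P)) ∂P ≤
      Real.exp ((3 + Real.exp 1 + C) *
        max (γ ^ 2 * ∫ ω, (X0 ω) ^ 2 ∂P) ((γ ^ 2 * ∫ ω, (X0 ω) ^ 2 ∂P) ^ (1 - γ))) := by
  set s := ∫ ω, (X0 ω) ^ 2 ∂P with hs
  set A := γ ^ 2 * s with hA
  set M := max A (A ^ (1 - γ)) with hM
  have ht0 : 0 < γ/2 := by linarith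
  have ht2 : γ/2 ≤ 1/2 := by linarith
  have hsnn : 0 ≤ s := integral_nonneg fun ω => sq_nonneg _
  have hC0 : 0 < C := lt_trans one_pos hC
  have he1 : (0:ℝ) < Real.exp 1 := Real.exp_pos 1
  rcases eq_or_lt_of_le hsnn with hs0 | hspos
  · -- degenerate case s = 0
    have hisq := int_sq P X0 C (γ/2) hmeas0 hnn0 hEtail hC0 ht0 ht2
    have hsqz : (fun ω => (X0 ω) ^ 2) =ᵐ[P] 0 := by
      rw [← integral_eq_zero_iff_of_nonneg (fun ω => sq_nonneg (X0 ω)) hisq]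
      exact hs0.symm
    have hX0z : X0 =ᵐ[P] 0 := by
      filter_upwards [hsqz] with ω hω
      have : (X0 ω) ^ 2 = 0 := hω
      simpa [pow_eq_zero_iff] using this
    have hmz : ∫ ω', X0 ω' ∂P = 0 := by
      rw [integral_congr_ae hX0z]; simp
    have hone : ∫ ω, Real.exp ((γ/2) * (X0 ω - ∫ ω', X0 ω' ∂P)) ∂P = 1 := by
      rw [hmz]
      have : (fun ω => Real.exp ((γ/2) * (X0 ω - 0))) =ᵐ[P] fun _ => 1 := by
        filter_upwards [hX0z] with ω hω
        simp [hω]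
      rw [integral_congr_ae this]
      simp
    rw [hone]
    have hA0 : A = 0 := by rw [hA, ← hs0, mul_zero]
    have hM0 : M = 0 := by
      rw [hM, hA0, Real.zero_rpow (by linarith : (1:ℝ) - γ ≠ 0)]
      simp
    rw [hM0, mul_zero, Real.exp_zero]
  · -- main case s > 0
    have hApos : 0 < A := by rw [hA]; positivity
    have hMA : A ≤ M := le_max_left _ _
    have hMpos : 0 < M := lt_of_lt_of_le hApos hMA
    set L := max 0 (-Real.log A) with hL
    have hLnn : 0 ≤ L := le_max_left _ _
    have hlogC : 0 < Real.log C := Real.log_pos hC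
    set T := 2 * Real.log C + 2 * (1 - γ) * L with hT
    have hTnn : 0 ≤ T := by
      have : 0 ≤ 2 * (1 - γ) * L := mul_nonneg (by linarith) hLnn
      linarith
    have hbd := centered_mgf_bound P X0 C (γ/2) hmeas0 hnn0 hEtail hC0 ht0 ht2 T hTnn
    refine le_trans hbd (Real.exp_le_exp.2 ?_)
    -- key exponent inequality
    have htT : (γ/2) * T = γ * Real.log C + γ * (1 - γ) * L := by rw [hT]; ring
    have hf1 : Real.exp (γ * Real.log C) ≤ C := by
      calc Real.exp (γ * Real.log C) ≤ Real.exp (Real.log C) := by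
            apply Real.exp_le_exp.2; nlinarith
        _ = C := Real.exp_log hC0
    have hf2 : A * Real.exp (γ * (1 - γ) * L) ≤ M := by
      rcases le_or_gt 1 A with h1A | hA1
      · have hL0 : L = 0 := by
          rw [hL, max_eq_left]; simp [Real.log_nonneg h1A]
        rw [hL0, mul_zero, Real.exp_zero, mul_one]; exact hMA
      · have hlogA : Real.log A < 0 := Real.log_neg hApos hA1
        have hL0 : L = -Real.log A := by
          rw [hL, max_eq_right]; linarith
        have hexpand : A * Real.exp (γ * (1 - γ) * L) =
            Real.exp ((1 - γ * (1 - γ)) * Real.log A) := by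
          rw [hL0, ← Real.exp_log hApos, ← Real.exp_add, Real.log_exp]
          congr 1; ring
        rw [hexpand]
        have : Real.exp ((1 - γ * (1 - γ)) * Real.log A) ≤ Real.exp ((1 - γ) * Real.log A) := by
          apply Real.exp_le_exp.2
          nlinarith [sq_nonneg γ]
        refine le_trans this ?_
        rw [mul_comm, ← Real.rpow_def_of_pos hApos]
        exact le_max_right _ _
    have hf3 : Real.exp (-((1 - γ) * L)) ≤ M := by
      rcases le_or_gt 1 A with h1A | hA1
      · have hL0 : L = 0 := by
          rw [hL, max_eq_left]; simp [Real.log_nonneg h1A]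
        rw [hL0]; simpa using le_trans h1A hMA
      · have hlogA : Real.log A < 0 := Real.log_neg hApos hA1
        have hL0 : L = -Real.log A := by
          rw [hL, max_eq_right]; linarith
        have : -((1 - γ) * L) = (1 - γ) * Real.log A := by rw [hL0]; ring
        rw [this, mul_comm, ← Real.rpow_def_of_pos hApos]
        exact le_max_right _ _
    -- term 1
    have hterm1 : (γ/2) ^ 2 / 2 * Real.exp ((γ/2) * T) * s ≤ C / 8 * M := by
      have : (γ/2) ^ 2 / 2 * Real.exp ((γ/2) * T) * s =
          1/8 * (Real.exp (γ * Real.log C) * (A * Real.exp (γ * (1 - γ) * L))) := by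
        rw [htT, hA, Real.exp_add]; ring
      rw [this]
      have h1 : Real.exp (γ * Real.log C) * (A * Real.exp (γ * (1 - γ) * L)) ≤ C * M := by
        apply mul_le_mul hf1 hf2 (by positivity) hC0.le
      linarith
    -- term 2
    have hterm2 : 2 * C * Real.exp ((γ/2) * T - T) ≤ 2 * M := by
      have hexp_le : Real.exp ((γ/2) * T - T) ≤ Real.exp (-Real.log C - (1 - γ) * L) := by
        apply Real.exp_le_exp.2
        rw [hT]
        nlinarith
      have heq : C * Real.exp (-Real.log C - (1 - γ) * L) = Real.exp (-((1 - γ) * L)) := by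
        rw [sub_eq_add_neg, Real.exp_add, ← mul_assoc, ← Real.exp_log hC0]
        rw [← Real.exp_add]
        simp
      calc 2 * C * Real.exp ((γ/2) * T - T) ≤ 2 * C * Real.exp (-Real.log C - (1 - γ) * L) := by
            apply mul_le_mul_of_nonneg_left hexp_le (by linarith)
        _ = 2 * Real.exp (-((1 - γ) * L)) := by rw [mul_assoc, heq]
        _ ≤ 2 * M := by linarith [hf3]
    have hfinal : C / 8 * M + 2 * M ≤ (3 + Real.exp 1 + C) * M := by nlinarith
    linarith
end

open ProbabilityTheory

/-- Large deviation bound bypassing Cramér's condition: for nonnegative i.i.d.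
random variables with tail `P(X > u) ≤ C e^{-u}`, `C > 1`, the centered sum satisfies
`P(∑ X̄ᵢ > x) ≤ exp(c_u n max(γ²E[X²], (γ²E[X²])^{1-γ}) - γ x / 2)` with
`c_u = 3 + e + C`. -/
theorem stmt_0 {Ω : Type*} [MeasurableSpace Ω] (P : Measure Ω) [IsProbabilityMeasure P]
    (n : ℕ) (X : Fin n → Ω → ℝ) (X0 : Ω → ℝ) (C : ℝ) (hC : 1 < C)
    (hmeas : ∀ i, Measurable (X i)) (hmeas0 : Measurable X0)
    (hnn : ∀ i ω, 0 ≤ X i ω) (hnn0 : ∀ ω, 0 ≤ X0 ω)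
    (hindep : iIndepFun X P)
    (hid : ∀ i, IdentDistrib (X i) X0 P P)
    (htail : ∀ u : ℝ, 0 ≤ u → (P {ω | u < X0 ω}).toReal ≤ C * Real.exp (-u))
    (γ : ℝ) (hγ0 : 0 < γ) (hγ1 : γ < 1) (x : ℝ) (hx : 0 < x) :
    (P {ω | x < ∑ i, (X i ω - ∫ ω', X i ω' ∂P)}).toReal ≤
      Real.exp ((3 + Real.exp 1 + C) * n *
        max (γ ^ 2 * ∫ ω, (X0 ω) ^ 2 ∂P)
            ((γ ^ 2 * ∫ ω, (X0 ω) ^ 2 ∂P) ^ (1 - γ)) - γ * x / 2) := by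
  have hC0 : 0 < C := lt_trans one_pos hC
  set m := ∫ ω', X0 ω' ∂P with hm
  set t : ℝ := γ / 2 with htdef
  have ht0 : 0 < t := by rw [htdef]; linarith
  have ht2 : t ≤ 1 / 2 := by rw [htdef]; linarith
  have hEtail : ∀ u : ℝ, 0 ≤ u → P {ω | u < X0 ω} ≤ ENNReal.ofReal (C * Real.exp (-u)) := by
    intro u hu
    exact (ENNReal.le_ofReal_iff_toReal_le (measure_ne_top P _) (by positivity)).2 (htail u hu)
  have hmi : ∀ i, (∫ ω', X i ω' ∂P) = m := fun i => (hid i).integral_eq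
  set Y : Fin n → Ω → ℝ := fun i ω => X i ω - m with hY
  set Z : Ω → ℝ := fun ω => X0 ω - m with hZ
  have hYmeas : ∀ i, Measurable (Y i) := fun i => (hmeas i).sub measurable_const
  have hYindep : iIndepFun Y P :=
    hindep.comp (fun _ y => y - m) (fun _ => measurable_id.sub measurable_const)
  have hidY : ∀ i, IdentDistrib (Y i) Z P P := fun i => (hid i).sub_const m
  have hie := int_exp P X0 C t hmeas0 hnn0 hEtail hC0 ht0 ht2
  have hintZ : Integrable (fun ω => Real.exp (t * Z ω)) P := by
    have hfun : (fun ω => Real.exp (t * Z ω)) =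
        fun ω => Real.exp (-(t * m)) * Real.exp (t * X0 ω) := by
      funext ω; rw [← Real.exp_add]; congr 1; rw [hZ]; ring
    rw [hfun]
    exact hie.const_mul _
  have hexpmeas : Measurable (fun y : ℝ => Real.exp (t * y)) :=
    (measurable_id.const_mul t).exp
  have hintY : ∀ i, Integrable (fun ω => Real.exp (t * Y i ω)) P := fun i =>
    ((hidY i).comp hexpmeas).integrable_iff.2 hintZ
  have hsum_int : Integrable (fun ω => Real.exp (t * (∑ i, Y i) ω)) P :=
    hYindep.integrable_exp_mul_sum hYmeas (fun i _ => hintY i)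
  have hcher := measure_ge_le_exp_mul_mgf (μ := P) (X := ∑ i, Y i) x ht0.le hsum_int
  have hmgf_sum : mgf (∑ i, Y i) P t = ∏ i, mgf (Y i) P t := hYindep.mgf_sum hYmeas Finset.univ
  have hmgf_i : ∀ i, mgf (Y i) P t = mgf Z P t := fun i =>
    ((hidY i).comp hexpmeas).integral_eq
  have hZbound : mgf Z P t ≤ Real.exp ((3 + Real.exp 1 + C) *
      max (γ ^ 2 * ∫ ω, (X0 ω) ^ 2 ∂P) ((γ ^ 2 * ∫ ω, (X0 ω) ^ 2 ∂P) ^ (1 - γ))) :=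
    per_var P X0 C hmeas0 hnn0 hEtail hC γ hγ0 hγ1
  set M := max (γ ^ 2 * ∫ ω, (X0 ω) ^ 2 ∂P) ((γ ^ 2 * ∫ ω, (X0 ω) ^ 2 ∂P) ^ (1 - γ)) with hMdef
  have hsub : {ω | x < ∑ i, (X i ω - ∫ ω', X i ω' ∂P)} ⊆ {ω | x ≤ (∑ i, Y i) ω} := by
    intro ω hω
    have h1 : x < ∑ i, (X i ω - ∫ ω', X i ω' ∂P) := hω
    have h2 : ∑ i, (X i ω - ∫ ω', X i ω' ∂P) = (∑ i, Y i) ω := by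
      rw [Finset.sum_apply]
      exact Finset.sum_congr rfl fun i _ => by rw [hmi i]
    simp only [Set.mem_setOf_eq]
    rw [← h2]
    exact h1.le
  have hmgf_nonneg : 0 ≤ mgf Z P t := mgf_nonneg
  calc (P {ω | x < ∑ i, (X i ω - ∫ ω', X i ω' ∂P)}).toReal
      ≤ (P {ω | x ≤ (∑ i, Y i) ω}).toReal :=
        ENNReal.toReal_mono (measure_ne_top P _) (measure_mono hsub)
    _ ≤ Real.exp (-t * x) * mgf (∑ i, Y i) P t := hcher
    _ = Real.exp (-t * x) * (mgf Z P t) ^ n := by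
        rw [hmgf_sum]
        congr 1
        rw [Finset.prod_congr rfl fun i _ => hmgf_i i, Finset.prod_const, Finset.card_univ,
          Fintype.card_fin]
    _ ≤ Real.exp (-t * x) * (Real.exp ((3 + Real.exp 1 + C) * M)) ^ n := by
        apply mul_le_mul_of_nonneg_left _ (Real.exp_nonneg _)
        exact pow_le_pow_left₀ hmgf_nonneg hZbound n
    _ = Real.exp ((3 + Real.exp 1 + C) * n * M - γ * x / 2) := by
        rw [← Real.exp_nat_mul, ← Real.exp_add]
        congr 1
        rw [htdef]
        ring
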